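/- arXiv:1301.6390 — 2 statements merged into one kernel-verified Lean document; each statement's English description precedes it below -/
import Mathlib

section
/- Let O ⊂ ℝʳ be open, ψ : ℝʳ → ℝ continuous, ψ > 0 on O and ψ = 0 off O, k : ℝʳ → ℝ Borel, locally bounded on O, with k ≥ ψ on O, ν = k·dx, and ξ = (ξ_{ij}) a symmetric locally bounded locally elliptic Borel matrix field on O with ξ_{ij}ψ ∈ H¹_loc(O). Then the bilinear form e(f,g) = Σ_{i,j} ∫_O ξ_{ij} ∂_i f ∂_j g ψ dx, defined for f, g smooth with compact support in O (extended to L²(ν)∩L¹(ν) restrictions), is closable in L²(ν). -/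
open MeasureTheory Filter
open scoped Topology BigOperators

section helpers
variable {r : ℕ}

lemma myIntegrable_of_bdd {f : (Fin r → ℝ) → ℝ} {K : Set (Fin r → ℝ)} (hK : IsCompact K)
    (hmeas : AEStronglyMeasurable f volume) (h0 : ∀ x ∉ K, f x = 0) {C : ℝ}
    (hb : ∀ x ∈ K, |f x| ≤ C) : Integrable f volume := by
  have hsupp : Function.support f ⊆ K := fun x hx => by
    by_contra h; exact hx (h0 x h)
  rw [← integrableOn_iff_integrable_of_support_subset hsupp]
  refine Measure.integrableOn_of_bounded (M := C) hK.measure_lt_top.ne hmeas ?_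
  filter_upwards [ae_restrict_mem hK.isClosed.measurableSet] with x hx
  simpa [Real.norm_eq_abs] using hb x hx

lemma myContDiff_pderiv {u : (Fin r → ℝ) → ℝ} (hu : ContDiff ℝ (⊤ : ℕ∞) u) (i : Fin r) :
    ContDiff ℝ (⊤ : ℕ∞) (fun x => fderiv ℝ u x (Pi.single i 1)) :=
  (hu.fderiv_right (by simp)).clm_apply contDiff_const

lemma myPderiv_zero {u : (Fin r → ℝ) → ℝ} {x : Fin r → ℝ} (hx : x ∉ tsupport u) (i : Fin r) :
    fderiv ℝ u x (Pi.single i 1) = 0 := by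
  have h : fderiv ℝ u x = 0 := by
    by_contra h
    exact hx (support_fderiv_subset (𝕜 := ℝ) (f := u) h)
  rw [h]; rfl

lemma abs_mul3_le {a b c A B C : ℝ} (ha : |a| ≤ A) (hb : |b| ≤ B) (hc : |c| ≤ C) :
    |a * b * c| ≤ A * B * C := by
  have hA : 0 ≤ A := (abs_nonneg a).trans ha
  have hB : 0 ≤ B := (abs_nonneg b).trans hb
  have hC : 0 ≤ C := (abs_nonneg c).trans hc
  calc |a * b * c| = |a| * |b| * |c| := by rw [abs_mul, abs_mul]
    _ ≤ A * B * C := by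
      apply mul_le_mul (mul_le_mul ha hb (abs_nonneg b) hA) hc (abs_nonneg c)
        (mul_nonneg hA hB)

lemma abs_mul4_le {a b c d A B C D : ℝ} (ha : |a| ≤ A) (hb : |b| ≤ B) (hc : |c| ≤ C)
    (hd : |d| ≤ D) : |a * b * c * d| ≤ A * B * C * D := by
  have hD : 0 ≤ D := (abs_nonneg d).trans hd
  have h3 := abs_mul3_le ha hb hc
  calc |a * b * c * d| = |a * b * c| * |d| := by rw [abs_mul]
    _ ≤ A * B * C * D := mul_le_mul h3 hd (abs_nonneg d)
        (le_trans (abs_nonneg _) h3)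

lemma my_amgm' (δ : ℝ) (hδ : 0 < δ) (A B : ℝ) : A * B ≤ δ * A ^ 2 + (4 * δ)⁻¹ * B ^ 2 := by
  rw [← sub_nonneg]
  have h : δ * A ^ 2 + (4 * δ)⁻¹ * B ^ 2 - A * B = (4 * δ)⁻¹ * (2 * δ * A - B) ^ 2 := by
    field_simp
    ring
  rw [h]
  positivity

lemma my_amgm (δ : ℝ) (hδ : 0 < δ) (a b : ℝ) : |a * b| ≤ δ * a ^ 2 + (4 * δ)⁻¹ * b ^ 2 := by
  have h := my_amgm' δ hδ |a| |b|
  rw [sq_abs, sq_abs] at h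
  calc |a * b| = |a| * |b| := abs_mul a b
    _ ≤ _ := h

end helpers

/-- The pre-Dirichlet form `e(f,g) = Σ_{i,j} ∫_O ξ_{ij} ∂_i f ∂_j g ψ dx`. -/
noncomputable def formE {r : ℕ} (O : Set (Fin r → ℝ)) (ξ : Fin r → Fin r → (Fin r → ℝ) → ℝ)
    (ψ : (Fin r → ℝ) → ℝ) (f g : (Fin r → ℝ) → ℝ) : ℝ :=
  ∑ i : Fin r, ∑ j : Fin r,
    ∫ x in O, ξ i j x * fderiv ℝ f x (Pi.single i 1) * fderiv ℝ g x (Pi.single j 1) * ψ x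

set_option maxHeartbeats 2000000 in
/-- Closability in `L²(ν)`, `ν = k dx`, of the form
`e(f,g) = Σ ∫_O ξ_{ij} ∂_i f ∂_j g ψ dx` on smooth compactly supported functions in `O`,
under: `ψ` continuous, `ψ > 0` on `O`, `ψ = 0` off `O`; `k` Borel, `k ≥ ψ` on `O`,
locally bounded on `O`; `ξ` symmetric, locally bounded and locally elliptic on `O`,
with `ξ_{ij} ψ ∈ H¹_loc(O)`. -/
theorem stmt9 {r : ℕ} (O : Set (Fin r → ℝ)) (hO : IsOpen O)
    (ψ : (Fin r → ℝ) → ℝ) (hψcont : Continuous ψ)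
    (hψpos : ∀ x ∈ O, 0 < ψ x) (hψ0 : ∀ x ∉ O, ψ x = 0)
    (k : (Fin r → ℝ) → ℝ) (hkmeas : Measurable k)
    (hkψ : ∀ x ∈ O, ψ x ≤ k x)
    (hkloc : ∀ K : Set (Fin r → ℝ), IsCompact K → K ⊆ O → ∃ C : ℝ, ∀ x ∈ K, k x ≤ C)
    (ξ : Fin r → Fin r → (Fin r → ℝ) → ℝ)
    (hξmeas : ∀ i j, Measurable (ξ i j))
    (hξsymm : ∀ i j x, ξ i j x = ξ j i x)
    (hξlocbdd : ∀ K : Set (Fin r → ℝ), IsCompact K → K ⊆ O →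
      ∃ C : ℝ, ∀ i j, ∀ x ∈ K, |ξ i j x| ≤ C)
    (hξell : ∀ K : Set (Fin r → ℝ), IsCompact K → K ⊆ O → ∃ cK > (0:ℝ), ∀ x ∈ K,
      ∀ v : Fin r → ℝ, cK * ‖v‖ ^ 2 ≤ ∑ i : Fin r, ∑ j : Fin r, ξ i j x * v i * v j)
    -- ξ_{ij} ψ ∈ H¹_loc(O): a locally square-integrable weak gradient exists
    (hH1loc : ∀ i j, ∃ g : Fin r → (Fin r → ℝ) → ℝ,
      (∀ l (K : Set (Fin r → ℝ)), IsCompact K → K ⊆ O →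
        IntegrableOn (fun x => (g l x) ^ 2) K volume) ∧
      (∀ l (φ : (Fin r → ℝ) → ℝ), ContDiff ℝ (⊤ : ℕ∞) φ → HasCompactSupport φ → tsupport φ ⊆ O →
        ∫ x, ξ i j x * ψ x * fderiv ℝ φ x (Pi.single l 1) = - ∫ x, g l x * φ x)) :
    -- closability: fₙ smooth compactly supported in O, fₙ → 0 in L²(k dx),
    -- e-Cauchy  ⟹  e(fₙ,fₙ) → 0
    ∀ f : ℕ → (Fin r → ℝ) → ℝ,
      (∀ n, ContDiff ℝ (⊤ : ℕ∞) (f n) ∧ HasCompactSupport (f n) ∧ tsupport (f n) ⊆ O) →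
      Tendsto (fun n => ∫ x, (f n x) ^ 2 * k x) atTop (𝓝 0) →
      (∀ ε > (0:ℝ), ∃ N, ∀ m ≥ N, ∀ n ≥ N,
        formE O ξ ψ (f n - f m) (f n - f m) < ε) →
      Tendsto (fun n => formE O ξ ψ (f n) (f n)) atTop (𝓝 0) := by
  intro f hf hL2 hCauchy
  -- integrability of the form integrands
  have hInt : ∀ u v : (Fin r → ℝ) → ℝ, ContDiff ℝ (⊤ : ℕ∞) u → HasCompactSupport u → tsupport u ⊆ O →
      ContDiff ℝ (⊤ : ℕ∞) v → ∀ i j : Fin r,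
      Integrable (fun x => ξ i j x * fderiv ℝ u x (Pi.single i 1) *
        fderiv ℝ v x (Pi.single j 1) * ψ x) volume := by
    intro u v hu huc huO hv i j
    obtain ⟨C, hC⟩ := hξlocbdd _ huc huO
    obtain ⟨Cu, hCu⟩ := IsCompact.exists_bound_of_continuousOn huc
      ((myContDiff_pderiv hu i).continuous.continuousOn)
    obtain ⟨Cv, hCv⟩ := IsCompact.exists_bound_of_continuousOn huc
      ((myContDiff_pderiv hv j).continuous.continuousOn)
    obtain ⟨Cp, hCp⟩ := IsCompact.exists_bound_of_continuousOn huc hψcont.continuousOn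
    refine myIntegrable_of_bdd (C := C * Cu * Cv * Cp) huc ?_ ?_ ?_
    · exact ((((hξmeas i j).aestronglyMeasurable.mul
        (myContDiff_pderiv hu i).continuous.aestronglyMeasurable).mul
        (myContDiff_pderiv hv j).continuous.aestronglyMeasurable).mul
        hψcont.aestronglyMeasurable)
    · intro x hx
      rw [myPderiv_zero hx i]; ring
    · intro x hx
      exact abs_mul4_le (hC i j x hx) (by simpa [Real.norm_eq_abs] using hCu x hx)
        (by simpa [Real.norm_eq_abs] using hCv x hx)
        (by simpa [Real.norm_eq_abs] using hCp x hx)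
  -- ξ ψ times continuous compactly supported is integrable
  have hIntC : ∀ (i j : Fin r) (c : (Fin r → ℝ) → ℝ), Continuous c → HasCompactSupport c →
      tsupport c ⊆ O → Integrable (fun x => ξ i j x * ψ x * c x) volume := by
    intro i j c hc hcc hcO
    obtain ⟨C, hC⟩ := hξlocbdd _ hcc hcO
    obtain ⟨Cp, hCp⟩ := IsCompact.exists_bound_of_continuousOn hcc hψcont.continuousOn
    obtain ⟨Cc, hCc⟩ := IsCompact.exists_bound_of_continuousOn hcc hc.continuousOn
    refine myIntegrable_of_bdd (C := C * Cp * Cc) hcc ?_ ?_ ?_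
    · exact (((hξmeas i j).aestronglyMeasurable.mul hψcont.aestronglyMeasurable).mul
        hc.aestronglyMeasurable)
    · intro x hx
      rw [image_eq_zero_of_notMem_tsupport hx]; ring
    · intro x hx
      exact abs_mul3_le (hC i j x hx) (by simpa [Real.norm_eq_abs] using hCp x hx)
        (by simpa [Real.norm_eq_abs] using hCc x hx)
  -- nonnegativity of the quadratic form
  have hQpos : ∀ u, ContDiff ℝ (⊤ : ℕ∞) u → HasCompactSupport u → tsupport u ⊆ O →
      0 ≤ formE O ξ ψ u u := by
    intro u hu huc huO
    have hint : ∀ i j : Fin r, IntegrableOn (fun x => ξ i j x * fderiv ℝ u x (Pi.single i 1) *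
        fderiv ℝ u x (Pi.single j 1) * ψ x) O volume :=
      fun i j => (hInt u u hu huc huO hu i j).integrableOn
    have e1 : formE O ξ ψ u u = ∫ x in O, ∑ i : Fin r, ∑ j : Fin r,
        ξ i j x * fderiv ℝ u x (Pi.single i 1) * fderiv ℝ u x (Pi.single j 1) * ψ x := by
      rw [formE]
      rw [integral_finset_sum _ (fun i _ => integrable_finset_sum _ (fun j _ => hint i j))]
      exact Finset.sum_congr rfl fun i _ =>
        (integral_finset_sum _ (fun j _ => hint i j)).symm
    rw [e1]
    refine setIntegral_nonneg hO.measurableSet fun x hx => ?_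
    obtain ⟨c, hc, hell⟩ := hξell {x} isCompact_singleton (by simpa using hx)
    have h1 := hell x rfl (fun i => fderiv ℝ u x (Pi.single i 1))
    have h2 : ∑ i : Fin r, ∑ j : Fin r,
        ξ i j x * fderiv ℝ u x (Pi.single i 1) * fderiv ℝ u x (Pi.single j 1) * ψ x
        = (∑ i : Fin r, ∑ j : Fin r,
          ξ i j x * fderiv ℝ u x (Pi.single i 1) * fderiv ℝ u x (Pi.single j 1)) * ψ x := by
      rw [Finset.sum_mul]
      exact Finset.sum_congr rfl fun i _ => by rw [Finset.sum_mul]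
    rw [h2]
    refine mul_nonneg (le_trans ?_ h1) (hψpos x hx).le
    positivity
  -- symmetry of the form
  have hsymm : ∀ u v : (Fin r → ℝ) → ℝ, formE O ξ ψ u v = formE O ξ ψ v u := by
    intro u v
    rw [formE, formE, Finset.sum_comm]
    refine Finset.sum_congr rfl fun a _ => Finset.sum_congr rfl fun b _ => ?_
    refine integral_congr_ae (Filter.Eventually.of_forall fun x => ?_)
    dsimp only
    rw [hξsymm]; ring
  -- expansion of the quadratic form of a difference
  have hExp : ∀ u v : (Fin r → ℝ) → ℝ,
      ContDiff ℝ (⊤ : ℕ∞) u → HasCompactSupport u → tsupport u ⊆ O →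
      ContDiff ℝ (⊤ : ℕ∞) v → HasCompactSupport v → tsupport v ⊆ O →
      formE O ξ ψ (u - v) (u - v) =
        formE O ξ ψ u u - formE O ξ ψ u v - formE O ξ ψ v u + formE O ξ ψ v v := by
    intro u v hu huc huO hv hvc hvO
    have hder : ∀ (x : Fin r → ℝ) (i : Fin r), fderiv ℝ (u - v) x (Pi.single i 1)
        = fderiv ℝ u x (Pi.single i 1) - fderiv ℝ v x (Pi.single i 1) := by
      intro x i
      have h : fderiv ℝ (fun y => u y - v y) x = fderiv ℝ u x - fderiv ℝ v x :=
        fderiv_fun_sub (hu.differentiable (by simp)).differentiableAt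
          (hv.differentiable (by simp)).differentiableAt
      have h2 : (u - v) = fun y => u y - v y := rfl
      rw [h2, h, ContinuousLinearMap.sub_apply]
    have key : ∀ i j : Fin r,
        (∫ x in O, ξ i j x * fderiv ℝ (u - v) x (Pi.single i 1) *
          fderiv ℝ (u - v) x (Pi.single j 1) * ψ x)
        = (∫ x in O, ξ i j x * fderiv ℝ u x (Pi.single i 1) *
            fderiv ℝ u x (Pi.single j 1) * ψ x)
          - (∫ x in O, ξ i j x * fderiv ℝ u x (Pi.single i 1) *
            fderiv ℝ v x (Pi.single j 1) * ψ x)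
          - (∫ x in O, ξ i j x * fderiv ℝ v x (Pi.single i 1) *
            fderiv ℝ u x (Pi.single j 1) * ψ x)
          + (∫ x in O, ξ i j x * fderiv ℝ v x (Pi.single i 1) *
            fderiv ℝ v x (Pi.single j 1) * ψ x) := by
      intro i j
      have IA := (hInt u u hu huc huO hu i j).integrableOn (s := O)
      have IB := (hInt u v hu huc huO hv i j).integrableOn (s := O)
      have IC := (hInt v u hv hvc hvO hu i j).integrableOn (s := O)
      have ID := (hInt v v hv hvc hvO hv i j).integrableOn (s := O)
      calc (∫ x in O, ξ i j x * fderiv ℝ (u - v) x (Pi.single i 1) *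
              fderiv ℝ (u - v) x (Pi.single j 1) * ψ x)
          = ∫ x in O, ((ξ i j x * fderiv ℝ u x (Pi.single i 1) *
              fderiv ℝ u x (Pi.single j 1) * ψ x
            - ξ i j x * fderiv ℝ u x (Pi.single i 1) *
              fderiv ℝ v x (Pi.single j 1) * ψ x)
            - (ξ i j x * fderiv ℝ v x (Pi.single i 1) *
              fderiv ℝ u x (Pi.single j 1) * ψ x
            - ξ i j x * fderiv ℝ v x (Pi.single i 1) *
              fderiv ℝ v x (Pi.single j 1) * ψ x)) := by
            refine integral_congr_ae (Filter.Eventually.of_forall fun x => ?_)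
            dsimp only
            rw [hder x i, hder x j]; ring
        _ = ((∫ x in O, ξ i j x * fderiv ℝ u x (Pi.single i 1) *
              fderiv ℝ u x (Pi.single j 1) * ψ x)
            - ∫ x in O, ξ i j x * fderiv ℝ u x (Pi.single i 1) *
              fderiv ℝ v x (Pi.single j 1) * ψ x)
            - ((∫ x in O, ξ i j x * fderiv ℝ v x (Pi.single i 1) *
              fderiv ℝ u x (Pi.single j 1) * ψ x)
            - ∫ x in O, ξ i j x * fderiv ℝ v x (Pi.single i 1) *
              fderiv ℝ v x (Pi.single j 1) * ψ x) := by
            rw [← integral_sub IA IB, ← integral_sub IC ID]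
            exact integral_sub (IA.sub IB) (IC.sub ID)
        _ = _ := by ring
    rw [formE, formE, formE, formE, formE]
    rw [Finset.sum_congr rfl fun i (_ : i ∈ Finset.univ) =>
      Finset.sum_congr rfl fun j (_ : j ∈ Finset.univ) => key i j]
    simp [Finset.sum_add_distrib, Finset.sum_sub_distrib]
  -- L² smallness on compact subsets of O
  have hS : ∀ K : Set (Fin r → ℝ), IsCompact K → K ⊆ O →
      Tendsto (fun m => ∫ x in K, (f m x) ^ 2) atTop (𝓝 0) := by
    intro K hK hKO
    rcases K.eq_empty_or_nonempty with hKe | hKne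
    · subst hKe; simpa using tendsto_const_nhds
    obtain ⟨x₀, hx₀K, hmin⟩ := hK.exists_isMinOn hKne hψcont.continuousOn
    have hcpos : 0 < ψ x₀ := hψpos x₀ (hKO hx₀K)
    have key : ∀ m, ∫ x in K, (f m x) ^ 2 ≤ (∫ x, (f m x) ^ 2 * k x) / ψ x₀ := by
      intro m
      obtain ⟨hfm, hfmc, hfmO⟩ := hf m
      obtain ⟨Ck, hCk⟩ := hkloc K hK hKO
      have hint0 : IntegrableOn (fun x => ψ x₀ * (f m x) ^ 2) K volume :=
        ((continuous_const.mul ((hfm.continuous).pow 2)).continuousOn).integrableOn_compact hK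
      have hint1 : IntegrableOn (fun x => (f m x) ^ 2 * ψ x) K volume :=
        (((hfm.continuous.pow 2).mul hψcont).continuousOn).integrableOn_compact hK
      have hknn : ∀ x ∈ O, 0 ≤ k x := fun x hx => (hψpos x hx).le.trans (hkψ x hx)
      have hint2 : IntegrableOn (fun x => (f m x) ^ 2 * k x) K volume := by
        obtain ⟨Cf, hCf⟩ := IsCompact.exists_bound_of_continuousOn hK
          ((hfm.continuous.pow 2)).continuousOn
        refine Measure.integrableOn_of_bounded (M := Cf * max Ck 0) hK.measure_lt_top.ne
          ((hfm.continuous.pow 2).aestronglyMeasurable.mul hkmeas.aestronglyMeasurable) ?_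
        filter_upwards [ae_restrict_mem hK.isClosed.measurableSet] with x hx
        have h1 : 0 ≤ k x := hknn x (hKO hx)
        have h2 : (f m x) ^ 2 ≤ Cf := by
          have := hCf x hx; rwa [Real.norm_eq_abs, abs_of_nonneg (sq_nonneg _)] at this
        rw [Real.norm_eq_abs, abs_of_nonneg (mul_nonneg (sq_nonneg _) h1)]
        nlinarith [hCk x hx, le_max_left Ck 0, le_max_right Ck 0, sq_nonneg (f m x)]
      have hint3 : Integrable (fun x => (f m x) ^ 2 * k x) volume := by
        obtain ⟨Ck', hCk'⟩ := hkloc _ hfmc hfmO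
        obtain ⟨Cf', hCf'⟩ := IsCompact.exists_bound_of_continuousOn hfmc
          ((hfm.continuous.pow 2)).continuousOn
        refine myIntegrable_of_bdd (C := Cf' * max Ck' 0) hfmc
          ((hfm.continuous.pow 2).aestronglyMeasurable.mul hkmeas.aestronglyMeasurable) ?_ ?_
        · intro x hx
          rw [image_eq_zero_of_notMem_tsupport hx]; ring
        · intro x hx
          have h1 : 0 ≤ k x := hknn x (hfmO hx)
          have h2 : (f m x) ^ 2 ≤ Cf' := by
            have := hCf' x hx; rwa [Real.norm_eq_abs, abs_of_nonneg (sq_nonneg _)] at this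
          rw [abs_of_nonneg (mul_nonneg (sq_nonneg _) h1)]
          nlinarith [hCk' x hx, le_max_left Ck' 0, le_max_right Ck' 0, sq_nonneg (f m x)]
      have step1 : ∫ x in K, ψ x₀ * (f m x) ^ 2 ≤ ∫ x in K, (f m x) ^ 2 * ψ x := by
        refine setIntegral_mono_on hint0 hint1 hK.isClosed.measurableSet fun x hx => ?_
        have hle : ψ x₀ ≤ ψ x := hmin hx
        nlinarith [sq_nonneg (f m x)]
      have step2 : ∫ x in K, (f m x) ^ 2 * ψ x ≤ ∫ x in K, (f m x) ^ 2 * k x := by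
        refine setIntegral_mono_on hint1 hint2 hK.isClosed.measurableSet fun x hx => ?_
        nlinarith [hkψ x (hKO hx), sq_nonneg (f m x)]
      have step3 : ∫ x in K, (f m x) ^ 2 * k x ≤ ∫ x, (f m x) ^ 2 * k x := by
        refine setIntegral_le_integral hint3 (Filter.Eventually.of_forall fun x => ?_)
        by_cases hx : x ∈ O
        · exact mul_nonneg (sq_nonneg _) (hknn x hx)
        · have : f m x = 0 := image_eq_zero_of_notMem_tsupport (fun h => hx (hfmO h))
          simp [this]
      have hc : ψ x₀ * ∫ x in K, (f m x) ^ 2 ≤ ∫ x, (f m x) ^ 2 * k x := by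
        rw [← integral_const_mul]
        exact step1.trans (step2.trans step3)
      rw [le_div_iff₀ hcpos, mul_comm]
      exact hc
    have h1 : Tendsto (fun m => (∫ x, (f m x) ^ 2 * k x) / ψ x₀) atTop (𝓝 0) := by
      simpa using hL2.div_const (ψ x₀)
    exact tendsto_of_tendsto_of_tendsto_of_le_of_le tendsto_const_nhds h1
      (fun m => integral_nonneg fun x => sq_nonneg _) key
  -- the key limit lemma
  have hA : ∀ K : Set (Fin r → ℝ), IsCompact K → K ⊆ O → ∀ w : (Fin r → ℝ) → ℝ,
      IntegrableOn (fun x => (w x) ^ 2) K volume → (∀ x ∉ K, w x = 0) →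
      Tendsto (fun m => ∫ x, w x * f m x) atTop (𝓝 0) := by
    intro K hK hKO w hw2 hw0
    have hrw : ∀ m, (∫ x, w x * f m x) = ∫ x in K, w x * f m x := fun m =>
      (setIntegral_eq_integral_of_forall_compl_eq_zero fun x hx => by
        rw [hw0 x hx, zero_mul]).symm
    rw [NormedAddCommGroup.tendsto_nhds_zero]
    intro ε hε
    obtain ⟨A, hAdef⟩ : ∃ A : ℝ, A = ∫ x in K, (w x) ^ 2 := ⟨_, rfl⟩
    have hA0 : 0 ≤ A := hAdef ▸ integral_nonneg fun x => sq_nonneg _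
    obtain ⟨δ, hδdef⟩ : ∃ δ : ℝ, δ = ε / (2 * (A + 1)) := ⟨_, rfl⟩
    have hδpos : 0 < δ := by rw [hδdef]; positivity
    have hev : ∀ᶠ m in atTop, (∫ x in K, (f m x) ^ 2) < 2 * δ * ε :=
      (hS K hK hKO).eventually (gt_mem_nhds (by positivity))
    filter_upwards [hev] with m hm
    obtain ⟨hfm, hfmc, hfmO⟩ := hf m
    have hfi : IntegrableOn (fun x => (f m x) ^ 2) K volume :=
      ((hfm.continuous.pow 2).continuousOn).integrableOn_compact hK
    have hmaj : Integrable (fun x => δ * (w x) ^ 2 + (4 * δ)⁻¹ * (f m x) ^ 2)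
        (volume.restrict K) := (hw2.const_mul δ).add (hfi.const_mul _)
    have hbound : ‖∫ x in K, w x * f m x‖ ≤ δ * A + (4 * δ)⁻¹ * ∫ x in K, (f m x) ^ 2 := by
      calc ‖∫ x in K, w x * f m x‖ ≤ ∫ x in K, ‖w x * f m x‖ :=
            norm_integral_le_integral_norm _
        _ ≤ ∫ x in K, (δ * (w x) ^ 2 + (4 * δ)⁻¹ * (f m x) ^ 2) := by
            refine integral_mono_of_nonneg (Filter.Eventually.of_forall fun x => norm_nonneg _)
              hmaj (Filter.Eventually.of_forall fun x => ?_)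
            simpa [Real.norm_eq_abs, abs_mul] using my_amgm δ hδpos (w x) (f m x)
        _ = δ * A + (4 * δ)⁻¹ * ∫ x in K, (f m x) ^ 2 := by
            rw [integral_add (hw2.const_mul δ) (hfi.const_mul _), integral_const_mul,
              integral_const_mul, hAdef]
    have h1 : δ * A < ε / 2 := by
      have e : δ * (A + 1) = ε / 2 := by
        rw [hδdef, div_mul_eq_mul_div,
          div_eq_div_iff (by positivity : (0:ℝ) < 2 * (A + 1)).ne' two_ne_zero]
        ring
      nlinarith [e, hδpos]
    have h2 : (4 * δ)⁻¹ * (∫ x in K, (f m x) ^ 2) < ε / 2 := by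
      have := mul_lt_mul_of_pos_left hm (inv_pos.2 (by positivity : (0:ℝ) < 4 * δ))
      calc (4 * δ)⁻¹ * (∫ x in K, (f m x) ^ 2) < (4 * δ)⁻¹ * (2 * δ * ε) := this
        _ = ε / 2 := by
            rw [inv_mul_eq_div, div_eq_div_iff (by positivity : (0:ℝ) < 4 * δ).ne' two_ne_zero]
            ring
    rw [hrw m]
    calc ‖∫ x in K, w x * f m x‖ ≤ δ * A + (4 * δ)⁻¹ * ∫ x in K, (f m x) ^ 2 := hbound
      _ < ε / 2 + ε / 2 := by linarith
      _ = ε := by ring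
  -- integration by parts: for fixed n, e(f m, f n) → 0
  have hIBP : ∀ n, Tendsto (fun m => formE O ξ ψ (f m) (f n)) atTop (𝓝 0) := by
    intro n
    obtain ⟨hfn, hfnc, hfnO⟩ := hf n
    have hterm : ∀ i j : Fin r, Tendsto (fun m => ∫ x in O,
        ξ i j x * fderiv ℝ (f m) x (Pi.single i 1) * fderiv ℝ (f n) x (Pi.single j 1) * ψ x)
        atTop (𝓝 0) := by
      intro i j
      obtain ⟨g, hg2, hgibp⟩ := hH1loc i j
      have hdvsm : ContDiff ℝ (⊤ : ℕ∞) (fun x => fderiv ℝ (f n) x (Pi.single j 1)) :=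
        myContDiff_pderiv hfn j
      have hdv0 : ∀ x ∉ tsupport (f n), fderiv ℝ (f n) x (Pi.single j 1) = 0 :=
        fun x hx => myPderiv_zero hx j
      have hdvsupp : Function.support (fun x => fderiv ℝ (f n) x (Pi.single j 1))
          ⊆ tsupport (f n) := fun x hx => by
        by_contra h; exact hx (hdv0 x h)
      have hdvc : HasCompactSupport (fun x => fderiv ℝ (f n) x (Pi.single j 1)) :=
        hfnc.mono' hdvsupp
      have hdvO : tsupport (fun x => fderiv ℝ (f n) x (Pi.single j 1)) ⊆ O :=
        (closure_minimal hdvsupp (isClosed_tsupport _)).trans hfnO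
      -- second derivative factor
      have hh2cont : Continuous (fun x =>
          fderiv ℝ (fun y => fderiv ℝ (f n) y (Pi.single j 1)) x (Pi.single i 1)) :=
        (myContDiff_pderiv hdvsm i).continuous
      have hh20 : ∀ x ∉ tsupport (f n),
          fderiv ℝ (fun y => fderiv ℝ (f n) y (Pi.single j 1)) x (Pi.single i 1) = 0 := by
        intro x hx
        refine myPderiv_zero (fun h => hx ?_) i
        exact (closure_minimal hdvsupp (isClosed_tsupport _)) h
      -- the identity for each m
      have key : ∀ m, (∫ x in O,
          ξ i j x * fderiv ℝ (f m) x (Pi.single i 1) * fderiv ℝ (f n) x (Pi.single j 1) * ψ x)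
          = -(∫ x, (g i x * fderiv ℝ (f n) x (Pi.single j 1)) * f m x)
            - ∫ x, (ξ i j x * ψ x *
                fderiv ℝ (fun y => fderiv ℝ (f n) y (Pi.single j 1)) x (Pi.single i 1)) * f m x := by
        intro m
        obtain ⟨hfm, hfmc, hfmO⟩ := hf m
        have hφsm : ContDiff ℝ (⊤ : ℕ∞) (fun y => f m y * fderiv ℝ (f n) y (Pi.single j 1)) :=
          hfm.mul hdvsm
        have hφc : HasCompactSupport (fun y => f m y * fderiv ℝ (f n) y (Pi.single j 1)) := by
          refine hfmc.mono' ?_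
          intro x hx
          have : f m x ≠ 0 := fun h => hx (by simp [h])
          exact subset_closure this
        have hφO : tsupport (fun y => f m y * fderiv ℝ (f n) y (Pi.single j 1)) ⊆ O := by
          refine (closure_minimal ?_ (isClosed_tsupport (f m))).trans hfmO
          intro x hx
          have : f m x ≠ 0 := fun h => hx (by simp [h])
          exact subset_closure this
        have hpt : ∀ x,
            ξ i j x * fderiv ℝ (f m) x (Pi.single i 1) * fderiv ℝ (f n) x (Pi.single j 1) * ψ x
            = ξ i j x * ψ x *
                fderiv ℝ (fun y => f m y * fderiv ℝ (f n) y (Pi.single j 1)) x (Pi.single i 1)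
              - (ξ i j x * ψ x *
                fderiv ℝ (fun y => fderiv ℝ (f n) y (Pi.single j 1)) x (Pi.single i 1)) * f m x := by
          intro x
          have hd : fderiv ℝ (fun y => f m y * fderiv ℝ (f n) y (Pi.single j 1)) x
              = f m x • fderiv ℝ (fun y => fderiv ℝ (f n) y (Pi.single j 1)) x
                + (fderiv ℝ (f n) x (Pi.single j 1)) • fderiv ℝ (f m) x :=
            fderiv_fun_mul (hfm.differentiable (by simp)).differentiableAt
              (hdvsm.differentiable (by simp)).differentiableAt
          rw [hd, ContinuousLinearMap.add_apply, ContinuousLinearMap.smul_apply,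
            ContinuousLinearMap.smul_apply, smul_eq_mul, smul_eq_mul]
          ring
        have hIP : Integrable (fun x => ξ i j x * ψ x *
            fderiv ℝ (fun y => f m y * fderiv ℝ (f n) y (Pi.single j 1)) x (Pi.single i 1))
            volume := by
          refine hIntC i j _ (myContDiff_pderiv hφsm i).continuous ?_ ?_
          · refine (hφc.fderiv (𝕜 := ℝ)).mono' ?_
            intro x hx
            exact subset_closure (fun h => hx (by simp [h]))
          · refine (closure_minimal ?_ (isClosed_tsupport _)).trans hφO
            intro x hx
            by_contra h
            exact hx (myPderiv_zero h i)
        have hIR : Integrable (fun x => (ξ i j x * ψ x *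
            fderiv ℝ (fun y => fderiv ℝ (f n) y (Pi.single j 1)) x (Pi.single i 1)) * f m x)
            volume := by
          have hsupp2 : Function.support (fun x =>
              fderiv ℝ (fun y => fderiv ℝ (f n) y (Pi.single j 1)) x (Pi.single i 1) * f m x)
              ⊆ tsupport (f m) := by
            intro x hx
            refine subset_closure (show f m x ≠ 0 from fun h => hx ?_)
            simp [h]
          have := hIntC i j (fun x =>
              fderiv ℝ (fun y => fderiv ℝ (f n) y (Pi.single j 1)) x (Pi.single i 1) * f m x)
            (hh2cont.mul hfm.continuous)
            (hfmc.mono' hsupp2)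
            ((closure_minimal hsupp2 (isClosed_tsupport (f m))).trans hfmO)
          refine this.congr (Filter.Eventually.of_forall fun x => ?_)
          dsimp only; ring
        calc (∫ x in O,
            ξ i j x * fderiv ℝ (f m) x (Pi.single i 1) * fderiv ℝ (f n) x (Pi.single j 1) * ψ x)
            = ∫ x, ξ i j x * fderiv ℝ (f m) x (Pi.single i 1) *
                fderiv ℝ (f n) x (Pi.single j 1) * ψ x :=
              setIntegral_eq_integral_of_forall_compl_eq_zero fun x hx => by
                rw [hψ0 x hx]; ring
          _ = ∫ x, (ξ i j x * ψ x *
                fderiv ℝ (fun y => f m y * fderiv ℝ (f n) y (Pi.single j 1)) x (Pi.single i 1)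
              - (ξ i j x * ψ x *
                fderiv ℝ (fun y => fderiv ℝ (f n) y (Pi.single j 1)) x (Pi.single i 1)) * f m x) :=
              integral_congr_ae (Filter.Eventually.of_forall fun x => hpt x)
          _ = (∫ x, ξ i j x * ψ x *
                fderiv ℝ (fun y => f m y * fderiv ℝ (f n) y (Pi.single j 1)) x (Pi.single i 1))
              - ∫ x, (ξ i j x * ψ x *
                fderiv ℝ (fun y => fderiv ℝ (f n) y (Pi.single j 1)) x (Pi.single i 1)) * f m x :=
              integral_sub hIP hIR
          _ = -(∫ x, (g i x * fderiv ℝ (f n) x (Pi.single j 1)) * f m x)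
              - ∫ x, (ξ i j x * ψ x *
                fderiv ℝ (fun y => fderiv ℝ (f n) y (Pi.single j 1)) x (Pi.single i 1)) * f m x := by
              rw [hgibp i _ hφsm hφc hφO]
              congr 1
              rw [neg_inj]
              refine integral_congr_ae (Filter.Eventually.of_forall fun x => ?_)
              dsimp only; ring
      -- first limit
      have lim1 : Tendsto (fun m =>
          ∫ x, (g i x * fderiv ℝ (f n) x (Pi.single j 1)) * f m x) atTop (𝓝 0) := by
        refine hA (tsupport (f n)) hfnc hfnO _ ?_ ?_
        · obtain ⟨Cd, hCd⟩ := IsCompact.exists_bound_of_continuousOn hfnc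
            hdvsm.continuous.continuousOn
          have hgK : IntegrableOn (fun x => (g i x) ^ 2) (tsupport (f n)) volume :=
            hg2 i _ hfnc hfnO
          have hbd : Integrable (fun x =>
              (fderiv ℝ (f n) x (Pi.single j 1)) ^ 2 * (g i x) ^ 2)
              (volume.restrict (tsupport (f n))) := by
            have hdv2c : HasCompactSupport
                (fun x => (fderiv ℝ (f n) x (Pi.single j 1)) ^ 2) := by
              refine hdvc.mono' ?_
              intro x hx
              refine subset_closure (show fderiv ℝ (f n) x (Pi.single j 1) ≠ 0
                from fun h => hx ?_)
              simp [h]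
            obtain ⟨Cb, hCb⟩ := hdv2c.exists_bound_of_continuous (hdvsm.continuous.pow 2)
            refine hgK.bdd_mul (c := Cb) ?_ ?_
            · exact ((hdvsm.continuous.pow 2).aestronglyMeasurable)
            · exact Filter.Eventually.of_forall fun x => hCb x
          refine hbd.congr (Filter.Eventually.of_forall fun x => ?_)
          dsimp only; ring
        · intro x hx
          rw [hdv0 x hx, mul_zero]
      -- second limit
      have lim2 : Tendsto (fun m => ∫ x, (ξ i j x * ψ x *
          fderiv ℝ (fun y => fderiv ℝ (f n) y (Pi.single j 1)) x (Pi.single i 1)) * f m x)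
          atTop (𝓝 0) := by
        refine hA (tsupport (f n)) hfnc hfnO _ ?_ ?_
        · obtain ⟨C, hC⟩ := hξlocbdd _ hfnc hfnO
          obtain ⟨Cp, hCp⟩ := IsCompact.exists_bound_of_continuousOn hfnc hψcont.continuousOn
          obtain ⟨Ch, hCh⟩ := IsCompact.exists_bound_of_continuousOn hfnc hh2cont.continuousOn
          refine Measure.integrableOn_of_bounded (M := (C * Cp * Ch) ^ 2)
            hfnc.measure_lt_top.ne ?_ ?_
          · exact ((((hξmeas i j).aestronglyMeasurable.mul hψcont.aestronglyMeasurable).mul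
              hh2cont.aestronglyMeasurable).pow 2)
          · filter_upwards [ae_restrict_mem (isClosed_tsupport (f n)).measurableSet] with x hx
            have h3 := abs_mul3_le (hC i j x hx) (by simpa [Real.norm_eq_abs] using hCp x hx)
              (by simpa [Real.norm_eq_abs] using hCh x hx)
            rw [Real.norm_eq_abs, abs_of_nonneg (sq_nonneg _), ← sq_abs]
            exact pow_le_pow_left₀ (abs_nonneg _) h3 2
        · intro x hx
          simp [hh20 x hx]
      have hcomb : Tendsto (fun m =>
          -(∫ x, (g i x * fderiv ℝ (f n) x (Pi.single j 1)) * f m x)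
          - ∫ x, (ξ i j x * ψ x *
              fderiv ℝ (fun y => fderiv ℝ (f n) y (Pi.single j 1)) x (Pi.single i 1)) * f m x)
          atTop (𝓝 (-0 - 0)) := lim1.neg.sub lim2
      rw [show (-(0:ℝ) - 0) = 0 by ring] at hcomb
      exact hcomb.congr fun m => (key m).symm
    have hsum : Tendsto (fun m => ∑ i : Fin r, ∑ j : Fin r, ∫ x in O,
        ξ i j x * fderiv ℝ (f m) x (Pi.single i 1) * fderiv ℝ (f n) x (Pi.single j 1) * ψ x)
        atTop (𝓝 (∑ i : Fin r, ∑ j : Fin r, (0:ℝ))) :=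
      tendsto_finset_sum _ fun i _ => tendsto_finset_sum _ fun j _ => hterm i j
    simpa [formE] using hsum
  -- final assembly
  rw [Metric.tendsto_atTop]
  intro ε hε
  obtain ⟨N, hN⟩ := hCauchy (ε / 2) (by positivity)
  refine ⟨N, fun n hn => ?_⟩
  have hQn : 0 ≤ formE O ξ ψ (f n) (f n) := hQpos _ (hf n).1 (hf n).2.1 (hf n).2.2
  have hub : formE O ξ ψ (f n) (f n) ≤ ε / 2 := by
    have hT : Tendsto (fun m => ε / 2 + 2 * formE O ξ ψ (f m) (f n)) atTop
        (𝓝 (ε / 2 + 2 * 0)) := tendsto_const_nhds.add ((hIBP n).const_mul 2)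
    have hev : ∀ᶠ m in atTop,
        formE O ξ ψ (f n) (f n) ≤ ε / 2 + 2 * formE O ξ ψ (f m) (f n) := by
      filter_upwards [eventually_ge_atTop N] with m hm
      have h1 := hN m hm n hn
      have h2 := hExp (f n) (f m) (hf n).1 (hf n).2.1 (hf n).2.2 (hf m).1 (hf m).2.1 (hf m).2.2
      have h3 := hsymm (f n) (f m)
      have h4 : 0 ≤ formE O ξ ψ (f m) (f m) := hQpos _ (hf m).1 (hf m).2.1 (hf m).2.2
      linarith
    have := ge_of_tendsto hT hev
    linarith
  rw [Real.dist_eq, sub_zero, abs_of_nonneg hQn]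
  linarith
end

section
/- Let f : ℝ → ℝ be absolutely continuous on an interval I with derivative f' ∈ L¹_loc. Then for every Lebesgue-null Borel set A ⊂ ℝ, the set {x ∈ I : f(x) ∈ A and f'(x) ≠ 0} has Lebesgue measure zero. Equivalently, the image under f of the measure |f'(x)|·dx is absolutely continuous with respect to Lebesgue measure. -/
/-!
Extend `f'` by zero outside `[a, b]`; then `f` agrees on `[a, b]` with the primitive `F` of an
integrable function, and by Lebesgue's differentiation theorem `F` has derivative `f'` almost
everywhere. It remains to see that the measurable set of points of `(a, b)` where `F` has a
nonzero derivative and `F x ∈ A` is null. Cut it into countably many pieces on which `F` is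
uniformly close to a linear isomorphism; `F` is injective on each piece `P`, so the
change-of-variables inequality `∫_P |F'| ≤ λ (F '' P) ≤ λ A = 0` forces `λ P = 0`.
-/

open MeasureTheory Set Filter

theorem ApproximatesLinearOn.injOn_of_isUnit {𝕜 E : Type*} [NontriviallyNormedField 𝕜]
    [NormedAddCommGroup E] [NormedSpace 𝕜 E] {f : E → E} {A : E →L[𝕜] E} {s : Set E}
    (hA : IsUnit A) (hf : ApproximatesLinearOn f A s (‖Ring.inverse A‖₊ + 1)⁻¹) : InjOn f s := by
  intro x hx y hy hxy
  set B := Ring.inverse A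
  have hA_le : ‖A (x - y)‖ ≤ (‖B‖ + 1)⁻¹ * ‖x - y‖ := by
    have := hf x hx y hy
    rwa [hxy, sub_self, zero_sub, norm_neg] at this
  have hB_le : ‖x - y‖ ≤ ‖B‖ * ‖A (x - y)‖ := by
    calc ‖x - y‖ = ‖B (A (x - y))‖ := by
          simpa using
            congrArg norm (DFunLike.congr_fun (Ring.inverse_mul_cancel A hA) (x - y)).symm
      _ ≤ ‖B‖ * ‖A (x - y)‖ := B.le_opNorm _
  have hcontr : ‖x - y‖ ≤ ‖B‖ / (‖B‖ + 1) * ‖x - y‖ := by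
    rw [div_eq_mul_inv, mul_assoc]
    exact hB_le.trans (mul_le_mul_of_nonneg_left hA_le (norm_nonneg _))
  have hlt : ‖B‖ / (‖B‖ + 1) < 1 := (div_lt_one (by positivity)).2 (lt_add_one _)
  have : ‖x - y‖ ≤ 0 := by nlinarith [norm_nonneg (x - y)]
  exact sub_eq_zero.1 (norm_le_zero_iff.1 this)

theorem ContinuousLinearMap.isUnit_of_det_ne_zero {𝕜 E : Type*} [NontriviallyNormedField 𝕜]
    [CompleteSpace 𝕜] [NormedAddCommGroup E] [NormedSpace 𝕜 E] [FiniteDimensional 𝕜 E]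
    (A : E →L[𝕜] E) (hA : A.det ≠ 0) : IsUnit A :=
  ⟨(ContinuousLinearEquiv.unitsEquiv 𝕜 E).symm (A.toContinuousLinearEquivOfDetNeZero hA), rfl⟩

section ChangeOfVariables

variable {E : Type*} [NormedAddCommGroup E] [NormedSpace ℝ E] [FiniteDimensional ℝ E]
  [MeasurableSpace E] [BorelSpace E] (μ : Measure E) [μ.IsAddHaarMeasure]
  {f : E → E} {f' : E → E →L[ℝ] E} {s : Set E}

theorem addHaar_eq_zero_of_injOn_of_addHaar_image_eq_zero (hs : MeasurableSet s)
    (hf' : ∀ x ∈ s, HasFDerivWithinAt f (f' x) s x) (hdet : ∀ x ∈ s, (f' x).det ≠ 0)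
    (hf : InjOn f s) (himg : μ (f '' s) = 0) : μ s = 0 := by
  have hint : ∫⁻ x in s, ENNReal.ofReal |(f' x).det| ∂μ = 0 :=
    nonpos_iff_eq_zero.1 (himg ▸ lintegral_abs_det_fderiv_le_addHaar_image μ hs hf' hf)
  rw [lintegral_eq_zero_iff' (aemeasurable_ofReal_abs_det_fderivWithin μ hs hf')] at hint
  have : ∀ᵐ x ∂μ.restrict s, False := by
    filter_upwards [hint, ae_restrict_mem hs] with x hx hxs
    simp [hdet x hxs] at hx
  rwa [eventually_false_iff_eq_bot, ae_eq_bot, Measure.restrict_eq_zero] at this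

theorem addHaar_eq_zero_of_addHaar_image_eq_zero (hs : MeasurableSet s)
    (hf' : ∀ x ∈ s, HasFDerivWithinAt f (f' x) s x) (hdet : ∀ x ∈ s, (f' x).det ≠ 0)
    (himg : μ (f '' s) = 0) : μ s = 0 := by
  rcases s.eq_empty_or_nonempty with rfl | hne
  · exact measure_empty
  obtain ⟨t, A, -, t_meas, t_cover, t_approx, t_A⟩ :=
    exists_partition_approximatesLinearOn_of_hasFDerivWithinAt f s f' hf'
      (fun A => (‖Ring.inverse A‖₊ + 1)⁻¹) (fun A => by positivity)
  have hcover : s ⊆ ⋃ n, s ∩ t n := fun x hx => by simpa [hx] using t_cover hx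
  refine measure_mono_null hcover (measure_iUnion_null fun n => ?_)
  obtain ⟨y, hy, hAy⟩ := t_A hne n
  have hA : IsUnit (A n) := (A n).isUnit_of_det_ne_zero (hAy ▸ hdet y hy)
  exact addHaar_eq_zero_of_injOn_of_addHaar_image_eq_zero μ (hs.inter (t_meas n))
    (fun x hx => (hf' x hx.1).mono inter_subset_left) (fun x hx => hdet x hx.1)
    ((t_approx n).injOn_of_isUnit hA) (measure_mono_null (image_mono inter_subset_left) himg)

end ChangeOfVariables

theorem Real.volume_eq_zero_of_volume_image_eq_zero {f f' : ℝ → ℝ} {s : Set ℝ}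
    (hs : MeasurableSet s) (hf' : ∀ x ∈ s, HasDerivWithinAt f (f' x) s x)
    (hf'0 : ∀ x ∈ s, f' x ≠ 0) (himg : volume (f '' s) = 0) : volume s = 0 :=
  addHaar_eq_zero_of_addHaar_image_eq_zero volume hs (fun x hx => (hf' x hx).hasFDerivWithinAt)
    (by simpa only [ContinuousLinearMap.det_toSpanSingleton] using hf'0) himg

theorem measurableSet_hasDerivAt {𝕜 F : Type*} [NontriviallyNormedField 𝕜] [CompleteSpace 𝕜]
    [MeasurableSpace 𝕜] [OpensMeasurableSpace 𝕜] [NormedAddCommGroup F] [NormedSpace 𝕜 F]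
    [CompleteSpace F] [MeasurableSpace F] [BorelSpace F] [SecondCountableTopology F]
    {f f' : 𝕜 → F} (hf' : Measurable f') : MeasurableSet {x | HasDerivAt f (f' x) x} := by
  have : {x | HasDerivAt f (f' x) x} = {x | DifferentiableAt 𝕜 f x} ∩ {x | deriv f x = f' x} := by
    ext x
    exact ⟨fun h => ⟨h.differentiableAt, h.deriv⟩,
      fun ⟨h, h'⟩ => show HasDerivAt f (f' x) x from h' ▸ h.hasDerivAt⟩
  rw [this]
  exact (measurableSet_of_differentiableAt 𝕜 f).inter
    (measurableSet_eq_fun (measurable_deriv f) hf')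

theorem eqOn_add_integral_indicator {f f' : ℝ → ℝ} {a b : ℝ}
    (hf : ∀ x ∈ Icc a b, f x = f a + ∫ t in a..x, f' t) :
    EqOn f (fun x => f a + ∫ t in a..x, (Icc a b).indicator f' t) (Icc a b) := by
  intro x hx
  rw [hf x hx]
  congr 1
  refine intervalIntegral.integral_congr fun t ht => ?_
  rw [uIcc_of_le hx.1] at ht
  exact (indicator_of_mem (show t ∈ Icc a b from ⟨ht.1, ht.2.trans hx.2⟩) f').symm

theorem stmt12_general (a b : ℝ) (f f' : ℝ → ℝ)
    (hf'meas : Measurable f') (hf'int : IntegrableOn f' (Set.Icc a b) volume)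
    (hfac : ∀ x ∈ Set.Icc a b, f x = f a + ∫ t in a..x, f' t) :
    ∀ A : Set ℝ, MeasurableSet A → volume A = 0 →
      volume {x ∈ Set.Icc a b | f x ∈ A ∧ f' x ≠ 0} = 0 := by
  intro A hA hA0
  set g := (Icc a b).indicator f'
  set F : ℝ → ℝ := fun x => f a + ∫ t in a..x, g t
  have hg : Integrable g := (integrable_indicator_iff measurableSet_Icc).2 hf'int
  have hg_meas : Measurable g := hf'meas.indicator measurableSet_Icc
  have hF_cont : Continuous F := continuous_const.add (hg.continuous_primitive a)
  have hF_deriv : ∀ᵐ x, HasDerivAt F (g x) x := by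
    filter_upwards [LocallyIntegrable.ae_hasDerivAt_integral hg.locallyIntegrable] with x hx
    exact (hx a).const_add (f a)
  set s := {x ∈ Ioo a b | F x ∈ A ∧ g x ≠ 0 ∧ HasDerivAt F (g x) x}
  have hs : MeasurableSet s :=
    measurableSet_Ioo.inter ((hF_cont.measurable hA).inter
      ((hg_meas (measurableSet_singleton 0).compl).inter (measurableSet_hasDerivAt hg_meas)))
  have hs0 : volume s = 0 :=
    Real.volume_eq_zero_of_volume_image_eq_zero hs (fun x hx => hx.2.2.2.hasDerivWithinAt)
      (fun x hx => hx.2.2.1) (measure_mono_null (by rintro _ ⟨x, hx, rfl⟩; exact hx.2.1) hA0)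
  have hsub : {x ∈ Icc a b | f x ∈ A ∧ f' x ≠ 0} ⊆ s ∪ {x | ¬HasDerivAt F (g x) x} ∪ {a, b} := by
    rintro x ⟨hxI, hxA, hx0⟩
    rcases eq_endpoints_or_mem_Ioo_of_mem_Icc hxI with rfl | rfl | hxI'
    · simp
    · simp
    by_cases hxD : HasDerivAt F (g x) x
    · have hgx : g x = f' x := indicator_of_mem hxI f'
      refine Or.inl (Or.inl ⟨hxI', ?_, hgx ▸ hx0, hxD⟩)
      have hfF : f x = F x := eqOn_add_integral_indicator hfac hxI
      rwa [← hfF]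
    · exact Or.inl (Or.inr hxD)
  exact measure_mono_null hsub (measure_union_null (measure_union_null hs0 (ae_iff.1 hF_deriv))
    ((toFinite _).measure_zero _))

/-- One-dimensional Energy Image Density property: if `f` is absolutely continuous on
`[a,b]` with integrable derivative `f'`, then for every Lebesgue-null Borel set `A`,
the set `{x ∈ [a,b] : f(x) ∈ A, f'(x) ≠ 0}` is Lebesgue-null; equivalently
`f_*(|f'|·λ) ≪ λ`. -/
theorem stmt12 (a b : ℝ) (hab : a ≤ b) (f f' : ℝ → ℝ)
    (hf'meas : Measurable f') (hf'int : IntegrableOn f' (Set.Icc a b) volume)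
    (hfac : ∀ x ∈ Set.Icc a b, f x = f a + ∫ t in a..x, f' t) :
    ∀ A : Set ℝ, MeasurableSet A → volume A = 0 →
      volume {x ∈ Set.Icc a b | f x ∈ A ∧ f' x ≠ 0} = 0 :=
  stmt12_general a b f f' hf'meas hf'int hfac
end
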